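/- Born's rule from unitary invariance: Let H be N-dimensional with orthonormal basis {|ψ_k⟩} and let p_a = |a⟩⟨a| for a unit vector a. Work on Sym^M(H) with number operators N_{ψ_k} = dΓ(p_{ψ_k}) and N_a = dΓ(p_a). Suppose ⟨·⟩ is a linear functional on operators on Sym^M(H) such that (i) ⟨Γ(U_θ)* X Γ(U_θ)⟩ = ⟨X⟩ for all θ ∈ ℝ^N, where U_θ = Σ_k e^{iθ_k} p_{ψ_k}, and (ii) ⟨N_{ψ_k}⟩ = δ_{k,k₀} for a fixed k₀. Then ⟨N_a⟩ = |⟨a|ψ_{k₀}⟩|². -/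

import Mathlib

open Complex Finset
open scoped InnerProductSpace

noncomputable section

variable {H : Type*} [NormedAddCommGroup H] [InnerProductSpace ℂ H] [FiniteDimensional ℂ H]

/-- The rank-one operator `|u⟩⟨v|`. -/
def rankOne (u v : H) : H →ₗ[ℂ] H where
  toFun x := ⟪v, x⟫_ℂ • u
  map_add' x y := by simp [inner_add_right, add_smul]
  map_smul' c x := by simp [inner_smul_right, smul_smul]

/-- The phase unitary `U(θ) = Σ_n e^{iθ_n} |a_n⟩⟨a_n|`. -/
def phaseU {N : ℕ} (a : OrthonormalBasis (Fin N) ℂ H) (θ : Fin N → ℝ) : H →ₗ[ℂ] H :=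
  ∑ n, Complex.exp ((θ n : ℂ) * Complex.I) • rankOne (a n) (a n)

/-!
The phase unitaries `U_θ` are diagonal in the basis `ψ`, so conjugating `|ψ_k⟩⟨ψ_l|` by `U_θ`
multiplies it by `e^{i(θ_l - θ_k)}`. Second quantization is compatible with this conjugation:
`Γ(U)* dΓ(X) Γ(U) = dΓ(U* X U)`, so `X ↦ ⟨dΓ X⟩` is a linear functional on one-particle operators
that is invariant under the phases. A phase `π` on a single basis vector then kills every
off-diagonal `⟨dΓ |ψ_k⟩⟨ψ_l|⟩`, and expanding `|a⟩⟨a| = Σ ⟨ψ_k|a⟩⟨a|ψ_l⟩ |ψ_k⟩⟨ψ_l|` leaves only the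
diagonal term `|⟨ψ_{k₀}|a⟩|²`.
-/

open ComplexConjugate

section PhaseUnitary

variable {N : ℕ} (ψ : OrthonormalBasis (Fin N) ℂ H)

omit [FiniteDimensional ℂ H] in
theorem rankOne_apply (u v x : H) : rankOne u v x = ⟪v, x⟫_ℂ • u := rfl

omit [FiniteDimensional ℂ H] in
theorem phaseU_apply_basis (θ : Fin N → ℝ) (k : Fin N) :
    phaseU ψ θ (ψ k) = exp (θ k * I) • ψ k := by
  simp [phaseU, rankOne_apply, ψ.inner_eq_ite, ite_smul]

omit [FiniteDimensional ℂ H] in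
theorem phaseU_neg_mul_phaseU (θ : Fin N → ℝ) : phaseU ψ (-θ) * phaseU ψ θ = 1 := by
  refine ψ.toBasis.ext fun k => ?_
  simp only [ψ.coe_toBasis, Module.End.mul_apply, phaseU_apply_basis, map_smul, smul_smul,
    Pi.neg_apply, ofReal_neg, ← exp_add, Module.End.one_apply]
  simp

theorem adjoint_phaseU (θ : Fin N → ℝ) : LinearMap.adjoint (phaseU ψ θ) = phaseU ψ (-θ) := by
  refine ((LinearMap.eq_adjoint_iff_basis ψ.toBasis ψ.toBasis _ _).mpr fun k l => ?_).symm
  simp only [ψ.coe_toBasis, phaseU_apply_basis, inner_smul_left, inner_smul_right, ψ.inner_eq_ite,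
    Pi.neg_apply, ← exp_conj]
  split_ifs with h
  · subst h; simp [map_neg, conj_ofReal]
  · simp

omit [FiniteDimensional ℂ H] in
theorem phaseU_neg_mul_rankOne_mul_phaseU (θ : Fin N → ℝ) (k l : Fin N) :
    phaseU ψ (-θ) * rankOne (ψ k) (ψ l) * phaseU ψ θ
      = exp ((θ l - θ k) * I) • rankOne (ψ k) (ψ l) := by
  refine ψ.toBasis.ext fun j => ?_
  simp only [ψ.coe_toBasis, Module.End.mul_apply, LinearMap.smul_apply, phaseU_apply_basis,
    map_smul, rankOne_apply, smul_smul, Pi.neg_apply, ψ.inner_eq_ite]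
  split_ifs with hlj
  · subst hlj
    rw [one_mul, mul_one, ← exp_add]
    push_cast
    ring_nf
  · simp

omit [FiniteDimensional ℂ H] in
theorem rankOne_eq_sum_basis (u v : H) :
    rankOne u v = ∑ k, ∑ l, (⟪ψ k, u⟫_ℂ * conj ⟪ψ l, v⟫_ℂ) • rankOne (ψ k) (ψ l) := by
  refine ψ.toBasis.ext fun j => ?_
  simp only [ψ.coe_toBasis, LinearMap.sum_apply, LinearMap.smul_apply, rankOne_apply,
    ψ.inner_eq_ite, ite_smul, one_smul, zero_smul, smul_ite, smul_zero, Finset.sum_ite_eq',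
    Finset.mem_univ, if_true]
  simp_rw [mul_comm, ← smul_smul, ← Finset.smul_sum, ψ.sum_repr', inner_conj_symm]

omit [FiniteDimensional ℂ H] in
theorem map_rankOne_eq_zero_of_ne (f : (H →ₗ[ℂ] H) →ₗ[ℂ] ℂ)
    (hf : ∀ θ X, f (phaseU ψ (-θ) * X * phaseU ψ θ) = f X) {k l : Fin N} (hkl : k ≠ l) :
    f (rankOne (ψ k) (ψ l)) = 0 := by
  -- a phase `π` on `ψ k` alone flips the sign of `|ψ k⟩⟨ψ l|`
  have h := hf (fun n => if n = k then Real.pi else 0) (rankOne (ψ k) (ψ l))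
  rw [phaseU_neg_mul_rankOne_mul_phaseU, map_smul, if_neg hkl.symm, if_pos rfl] at h
  simp only [ofReal_zero, zero_sub, neg_mul, exp_neg, exp_pi_mul_I, smul_eq_mul] at h
  linear_combination -h / 2

omit [FiniteDimensional ℂ H] in
theorem map_rankOne_self_eq_norm_inner_sq (f : (H →ₗ[ℂ] H) →ₗ[ℂ] ℂ)
    (hf : ∀ θ X, f (phaseU ψ (-θ) * X * phaseU ψ θ) = f X) (k₀ : Fin N)
    (hdiag : ∀ k, f (rankOne (ψ k) (ψ k)) = if k = k₀ then 1 else 0) (a : H) :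
    f (rankOne a a) = (‖⟪a, ψ k₀⟫_ℂ‖ ^ 2 : ℂ) := by
  have hrow : ∀ k, ∑ l, (⟪ψ k, a⟫_ℂ * conj ⟪ψ l, a⟫_ℂ) * f (rankOne (ψ k) (ψ l))
      = if k = k₀ then ⟪ψ k, a⟫_ℂ * conj ⟪ψ k, a⟫_ℂ else 0 := fun k => by
    rw [Finset.sum_eq_single k (fun l _ hlk => by
      rw [map_rankOne_eq_zero_of_ne ψ f hf (Ne.symm hlk), mul_zero]) (by simp), hdiag]
    simp
  simp only [rankOne_eq_sum_basis ψ a a, map_sum, map_smul, smul_eq_mul, hrow, Finset.sum_ite_eq',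
    Finset.mem_univ, if_true, mul_conj, normSq_eq_norm_sq, norm_inner_symm]
  norm_cast

end PhaseUnitary

section SymmetricPower

variable {F : Type*} [NormedAddCommGroup F] [InnerProductSpace ℂ F] {M : ℕ}
  (sym : MultilinearMap ℂ (fun _ : Fin M => H) F)

omit [FiniteDimensional ℂ H] in
theorem isLinearMap_dΓ (hspan : Submodule.span ℂ (Set.range ⇑sym) = ⊤)
    {dΓ : (H →ₗ[ℂ] H) → (F →ₗ[ℂ] F)}
    (hdΓ : ∀ X φ, dΓ X (sym φ) = ∑ m, sym (Function.update φ m (X (φ m)))) :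
    IsLinearMap ℂ dΓ where
  map_add X Y := LinearMap.ext_on_range hspan fun φ => by
    simp [hdΓ, MultilinearMap.map_update_add, Finset.sum_add_distrib]
  map_smul c X := LinearMap.ext_on_range hspan fun φ => by
    simp [hdΓ, MultilinearMap.map_update_smul, Finset.smul_sum]

omit [FiniteDimensional ℂ H] in
theorem Γ_mul_dΓ_mul_Γ (hspan : Submodule.span ℂ (Set.range ⇑sym) = ⊤)
    {Γ dΓ : (H →ₗ[ℂ] H) → (F →ₗ[ℂ] F)} (hΓ : ∀ O φ, Γ O (sym φ) = sym (fun i => O (φ i)))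
    (hdΓ : ∀ X φ, dΓ X (sym φ) = ∑ m, sym (Function.update φ m (X (φ m))))
    {U V : H →ₗ[ℂ] H} (hVU : V * U = 1) (X : H →ₗ[ℂ] H) :
    Γ V * dΓ X * Γ U = dΓ (V * X * U) := by
  have hVU_apply (x : H) : V (U x) = x := by simpa using LinearMap.congr_fun hVU x
  refine LinearMap.ext_on_range hspan fun φ => ?_
  simp only [Module.End.mul_apply, hΓ, hdΓ, map_sum]
  refine Finset.sum_congr rfl fun m _ => congrArg sym (funext fun i => ?_)
  rcases eq_or_ne i m with rfl | him
  · simp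
  · simp [him, hVU_apply]

theorem adjoint_Γ [FiniteDimensional ℂ F] (hspan : Submodule.span ℂ (Set.range ⇑sym) = ⊤)
    (hinner : ∀ φ χ : Fin M → H,
      ⟪sym φ, sym χ⟫_ℂ = ∑ τ : Equiv.Perm (Fin M), ∏ i, ⟪φ i, χ (τ i)⟫_ℂ)
    {Γ : (H →ₗ[ℂ] H) → (F →ₗ[ℂ] F)} (hΓ : ∀ O φ, Γ O (sym φ) = sym (fun i => O (φ i)))
    (O : H →ₗ[ℂ] H) : LinearMap.adjoint (Γ O) = Γ (LinearMap.adjoint O) := by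
  refine LinearMap.ext_on_range hspan fun φ => ext_inner_right ℂ fun y => ?_
  refine LinearMap.congr_fun
    (LinearMap.ext_on_range hspan fun χ => ?_ : innerₛₗ ℂ _ = innerₛₗ ℂ _) y
  simp [LinearMap.adjoint_inner_left, hΓ, hinner]

end SymmetricPower

theorem stmt_14_general {N M : ℕ} {F : Type*} [NormedAddCommGroup F] [InnerProductSpace ℂ F]
    [FiniteDimensional ℂ F]
    (ψ : OrthonormalBasis (Fin N) ℂ H) (a : H)
    (sym : MultilinearMap ℂ (fun _ : Fin M => H) F)
    (hspan : Submodule.span ℂ (Set.range ⇑sym) = ⊤)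
    (hinner : ∀ φ χ : Fin M → H,
      ⟪sym φ, sym χ⟫_ℂ = ∑ τ : Equiv.Perm (Fin M), ∏ i, ⟪φ i, χ (τ i)⟫_ℂ)
    (Γ : (H →ₗ[ℂ] H) → (F →ₗ[ℂ] F))
    (hΓ : ∀ (O : H →ₗ[ℂ] H) (φ : Fin M → H), Γ O (sym φ) = sym (fun i => O (φ i)))
    (dΓ : (H →ₗ[ℂ] H) → (F →ₗ[ℂ] F))
    (hdΓ : ∀ (X : H →ₗ[ℂ] H) (φ : Fin M → H),
      dΓ X (sym φ) = ∑ m, sym (Function.update φ m (X (φ m))))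
    (E : (F →ₗ[ℂ] F) →ₗ[ℂ] ℂ)
    (hinv : ∀ (θ : Fin N → ℝ) (X : F →ₗ[ℂ] F),
      E (LinearMap.adjoint (Γ (phaseU ψ θ)) * X * Γ (phaseU ψ θ)) = E X)
    (k₀ : Fin N)
    (hE : ∀ k : Fin N, E (dΓ (rankOne (ψ k) (ψ k))) = if k = k₀ then 1 else 0) :
    E (dΓ (rankOne a a)) = (‖⟪a, ψ k₀⟫_ℂ‖ ^ 2 : ℂ) := by
  let dΓₗ := (isLinearMap_dΓ sym hspan hdΓ).mk' dΓ
  have hphase : ∀ θ X, (E ∘ₗ dΓₗ) (phaseU ψ (-θ) * X * phaseU ψ θ) = (E ∘ₗ dΓₗ) X := by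
    intro θ X
    have hU := phaseU_neg_mul_phaseU ψ θ
    rw [← adjoint_phaseU] at hU ⊢
    change E (dΓ _) = E (dΓ X)
    rw [← Γ_mul_dΓ_mul_Γ sym hspan hΓ hdΓ hU, ← adjoint_Γ sym hspan hinner hΓ, hinv]
  exact map_rankOne_self_eq_norm_inner_sq ψ (E ∘ₗ dΓₗ) hphase k₀ hE a

/-- Born's rule from unitary invariance: if a linear functional `⟨·⟩` on the
operators of `Sym^M(H)` is invariant under conjugation by all `Γ(U_θ)`,
`U_θ = Σ_k e^{iθ_k} p_{ψ_k}`, and satisfies `⟨N_{ψ_k}⟩ = δ_{k,k₀}`, then for any unit vector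
`a` the number operator `N_a = dΓ(|a⟩⟨a|)` has average `⟨N_a⟩ = |⟨a|ψ_{k₀}⟩|²`. -/
theorem stmt_14 {N M : ℕ} {F : Type*} [NormedAddCommGroup F] [InnerProductSpace ℂ F]
    [FiniteDimensional ℂ F]
    (ψ : OrthonormalBasis (Fin N) ℂ H) (a : H) (ha : ‖a‖ = 1)
    (sym : MultilinearMap ℂ (fun _ : Fin M => H) F)
    (hsymm : ∀ (φ : Fin M → H) (τ : Equiv.Perm (Fin M)), sym (φ ∘ τ) = sym φ)
    (hspan : Submodule.span ℂ (Set.range ⇑sym) = ⊤)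
    (hinner : ∀ φ χ : Fin M → H,
      ⟪sym φ, sym χ⟫_ℂ = ∑ τ : Equiv.Perm (Fin M), ∏ i, ⟪φ i, χ (τ i)⟫_ℂ)
    (Γ : (H →ₗ[ℂ] H) → (F →ₗ[ℂ] F))
    (hΓ : ∀ (O : H →ₗ[ℂ] H) (φ : Fin M → H), Γ O (sym φ) = sym (fun i => O (φ i)))
    (dΓ : (H →ₗ[ℂ] H) → (F →ₗ[ℂ] F))
    (hdΓ : ∀ (X : H →ₗ[ℂ] H) (φ : Fin M → H),
      dΓ X (sym φ) = ∑ m, sym (Function.update φ m (X (φ m))))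
    (E : (F →ₗ[ℂ] F) →ₗ[ℂ] ℂ)
    (hinv : ∀ (θ : Fin N → ℝ) (X : F →ₗ[ℂ] F),
      E (LinearMap.adjoint (Γ (phaseU ψ θ)) * X * Γ (phaseU ψ θ)) = E X)
    (k₀ : Fin N)
    (hE : ∀ k : Fin N, E (dΓ (rankOne (ψ k) (ψ k))) = if k = k₀ then 1 else 0) :
    E (dΓ (rankOne a a)) = (‖⟪a, ψ k₀⟫_ℂ‖ ^ 2 : ℂ) :=
  stmt_14_general ψ a sym hspan hinner Γ hΓ dΓ hdΓ E hinv k₀ hE
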